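/- arXiv:2306.00615 — 2 statements merged into one kernel-verified Lean document; each statement's English description precedes it below -/
import Mathlib

section
/- For every non-constant Boolean function f:{0,1}^m→{0,1} and every n∈ℕ: (1) there exists a function g:{0,1}^n→{0,1} such that C(KW_f ⋄ KW_g) ≥ Cphd(KW_f ⋄ MUX_n) − log₂(m·n) − 3; and (2) there exists a function g:{0,1}^n→{0,1} such that C(KW_f ⊛ KW_g) ≥ Cphd(KW_f ⊛ MUX_n) − log₂(m·n) − 4. -/
/-! Let `g` maximize `C(KW_f ⋄ KW_g)` (resp. `C(KW_f ⊛ KW_g)`) and fix optimal protocols for every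
`g'`. In the multiplexor game each player runs, for `D = max C` rounds, the optimal protocol
for their own function; a player at a leaf pads with dummy bits. When `g_A = g_B` this is a
classical simulation ending at a valid entry `(i, j)`. Alice then announces `(i, j)` together
with `X_{i,j}` (and `g_A(X_i)` in the strong case) in `⌈log₂(m n)⌉ + 1` (resp. `+ 2`) bits, and Bob
answers with one bit whether this is a valid entry against his own input. If he rejects, both
output `⊥`, which is correct because the certificate can only fail when `g_A ≠ g_B`. -/

/-! ### Basic objects: Boolean functions, matrices, compositions -/

/-- Boolean functions on `n`-bit strings. -/
abbrev BFunc (n : ℕ) : Type := (Fin n → Bool) → Bool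

/-- Boolean `m × n` matrices, viewed as tuples of rows. -/
abbrev BMat (m n : ℕ) : Type := Fin m → Fin n → Bool

/-- The column vector obtained by applying `g` to every row of `X`. -/
def gRows {m n : ℕ} (g : BFunc n) (X : BMat m n) : Fin m → Bool := fun i => g (X i)

/-- The composition `f ⋄ g` applied to a matrix `X`. -/
def compFG {m n : ℕ} (f : BFunc m) (g : BFunc n) (X : BMat m n) : Bool := f (gRows g X)

/-- A Boolean function is non-constant. -/
def NonConst {k : ℕ} (f : BFunc k) : Prop := (∃ x, f x = true) ∧ (∃ x, f x = false)

/-- A Boolean function on `n` bits is balanced if it has exactly `2^(n-1)` ones. -/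
def IsBalanced {n : ℕ} (g : BFunc n) : Prop := {x | g x = true}.ncard = 2 ^ (n - 1)

/-- The set `V₀` of balanced functions. -/
def BalancedFuncs (n : ℕ) : Set (BFunc n) := {g | IsBalanced g}

/-- The set of matrices `X` with `g(X) = a`. -/
def ginv {m n : ℕ} (g : BFunc n) (a : Fin m → Bool) : Set (BMat m n) := {X | gRows g X = a}

/-! ### De Morgan formulas and formula complexity -/

/-- De Morgan formulas over `m` variables: leaves are literals, gates are AND/OR. -/
inductive DMF (m : ℕ) : Type where
  | lit (i : Fin m) (pos : Bool)
  | and (l r : DMF m)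
  | or (l r : DMF m)

namespace DMF

/-- Size of a formula: its number of leaves. -/
def size {m : ℕ} : DMF m → ℕ
  | lit _ _ => 1
  | and l r => l.size + r.size
  | or l r => l.size + r.size

/-- Evaluation of a formula. -/
def eval {m : ℕ} : DMF m → (Fin m → Bool) → Bool
  | lit i pos, x => if pos then x i else !(x i)
  | and l r, x => l.eval x && r.eval x
  | or l r, x => l.eval x || r.eval x

end DMF

/-- `L(f)`: the minimal size of a de Morgan formula computing `f`. -/
noncomputable def Lfun {m : ℕ} (f : BFunc m) : ℕ :=
  sInf {s | ∃ φ : DMF m, φ.size = s ∧ ∀ x, φ.eval x = f x}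

/-- `L(A × B)`: the minimal size of a de Morgan formula separating `A` from `B`
(`0` if `A` or `B` is empty). -/
noncomputable def Lrect {m : ℕ} (A B : Set (Fin m → Bool)) : ℕ :=
  open Classical in
  if A.Nonempty ∧ B.Nonempty then
    sInf {s | ∃ φ : DMF m, φ.size = s ∧
      (∀ a ∈ A, φ.eval a = true) ∧ (∀ b ∈ B, φ.eval b = false)}
  else 0

/-! ### Deterministic communication protocols -/

/-- A deterministic communication protocol tree: at each internal vertex the
indicated player sends a bit determined by her input. -/
inductive Prot (X Y O : Type) : Type where
  | leaf (o : O)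
  | alice (s : X → Bool) (c : Bool → Prot X Y O)
  | bob (s : Y → Bool) (c : Bool → Prot X Y O)

namespace Prot

variable {X Y O : Type}

/-- Depth of a protocol tree. -/
def depth : Prot X Y O → ℕ
  | leaf _ => 0
  | alice _ c => 1 + max (c false).depth (c true).depth
  | bob _ c => 1 + max (c false).depth (c true).depth

/-- Running a protocol on a pair of inputs. -/
def run : Prot X Y O → X → Y → O
  | leaf o, _, _ => o
  | alice s c, x, y => (c (s x)).run x y
  | bob s c, x, y => (c (s y)).run x y

/-- A protocol solves a relation if on every input pair it outputs a valid solution. -/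
def Solves (p : Prot X Y O) (R : X → Y → O → Prop) : Prop :=
  ∀ x y, R x y (p.run x y)

/-- Alice's input `x` is consistent with the transcript `tr`. -/
def ConsA : Prot X Y O → List Bool → X → Prop
  | _, [], _ => True
  | leaf _, _ :: _, _ => False
  | alice s c, b :: tr, x => s x = b ∧ ConsA (c b) tr x
  | bob _ c, b :: tr, x => ConsA (c b) tr x

/-- Bob's input `y` is consistent with the transcript `tr`. -/
def ConsB : Prot X Y O → List Bool → Y → Prop
  | _, [], _ => True
  | leaf _, _ :: _, _ => False
  | alice _ c, b :: tr, y => ConsB (c b) tr y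
  | bob s c, b :: tr, y => s y = b ∧ ConsB (c b) tr y

/-- `tr` is a (possibly partial) transcript of `p`: each player has a consistent input. -/
def IsTranscript (p : Prot X Y O) (tr : List Bool) : Prop :=
  (∃ x, ConsA p tr x) ∧ (∃ y, ConsB p tr y)

end Prot

/-- `C(R)`: the deterministic communication complexity of a relation. -/
noncomputable def CC {X Y O : Type} (R : X → Y → O → Prop) : ℕ :=
  sInf {d | ∃ p : Prot X Y O, p.Solves R ∧ p.depth = d}

/-! ### Karchmer–Wigderson compositions and multiplexor compositions -/

/-- The relation `KW_f ⋄ KW_g`. -/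
def KWdiam {m n : ℕ} (f : BFunc m) (g : BFunc n) :
    {X : BMat m n // compFG f g X = true} → {Y : BMat m n // compFG f g Y = false} →
      Fin m × Fin n → Prop :=
  fun X Y o => X.1 o.1 o.2 ≠ Y.1 o.1 o.2

/-- The strong composition `KW_f ⊛ KW_g`. -/
def KWstrong {m n : ℕ} (f : BFunc m) (g : BFunc n) :
    {X : BMat m n // compFG f g X = true} → {Y : BMat m n // compFG f g Y = false} →
      Fin m × Fin n → Prop :=
  fun X Y o => X.1 o.1 o.2 ≠ Y.1 o.1 o.2 ∧ g (X.1 o.1) ≠ g (Y.1 o.1)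

/-- Alice's inputs in the multiplexor compositions: a function `g` and a matrix `X`
with `(f ⋄ g)(X) = 1`. -/
def AliceMux (m n : ℕ) (f : BFunc m) : Type :=
  {p : BFunc n × BMat m n // compFG f p.1 p.2 = true}

/-- Bob's inputs in the multiplexor compositions. -/
def BobMux (m n : ℕ) (f : BFunc m) : Type :=
  {p : BFunc n × BMat m n // compFG f p.1 p.2 = false}

/-- The relation `KW_f ⋄ MUX_n` (output `none` plays the role of `⊥`). -/
def MuxDiam {m n : ℕ} (f : BFunc m) :
    AliceMux m n f → BobMux m n f → Option (Fin m × Fin n) → Prop :=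
  fun x y o =>
    match o with
    | none => x.1.1 ≠ y.1.1
    | some (i, j) => x.1.2 i j ≠ y.1.2 i j

/-- The strong multiplexor composition `KW_f ⊛ MUX_n`. -/
def MuxStrong {m n : ℕ} (f : BFunc m) :
    AliceMux m n f → BobMux m n f → Option (Fin m × Fin n) → Prop :=
  fun x y o =>
    match o with
    | none => x.1.1 ≠ y.1.1
    | some (i, j) => x.1.2 i j ≠ y.1.2 i j ∧ x.1.1 (x.1.2 i) ≠ y.1.1 (y.1.2 i)

/-- The function part of Alice's multiplexor input. -/
def muxGA {m n : ℕ} {f : BFunc m} (x : AliceMux m n f) : BFunc n := x.1.1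

/-- The function part of Bob's multiplexor input. -/
def muxGB {m n : ℕ} {f : BFunc m} (y : BobMux m n f) : BFunc n := y.1.1

/-! ### Half-duplex protocols with adversary -/

/-- One player's tree in a half-duplex protocol: at each internal vertex, the
player's input determines whether she sends a bit (`some b`) or receives (`none`);
the four children are indexed by (isSend, bit). -/
inductive HDTree (X O : Type) : Type where
  | leaf (o : O)
  | node (act : X → Option Bool) (child : Bool → Bool → HDTree X O)

namespace HDTree

variable {X O : Type}

/-- The tree is full of depth `d`: every leaf is at distance exactly `d` from the root. -/
inductive IsFull : HDTree X O → ℕ → Prop where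
  | leaf (o : O) : IsFull (leaf o) 0
  | node {act : X → Option Bool} {child : Bool → Bool → HDTree X O} {d : ℕ}
      (h : ∀ s b, IsFull (child s b) d) : IsFull (node act child) (d + 1)

/-- The input `x` is consistent with the transcript `tr`: there is a vertex at
depth `|tr|` reachable on `x` along edges labeled `send(trᵢ)` or `receive(trᵢ)`. -/
def Cons : HDTree X O → List Bool → X → Prop
  | _, [], _ => True
  | leaf _, _ :: _, _ => False
  | node act child, b :: tr, x =>
      match act x with
      | some c => c = b ∧ Cons (child true b) tr x
      | none => Cons (child false b) tr x

end HDTree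

/-- One round of a half-duplex execution; `ab` are the bits delivered by the
adversary in case the round is silent. -/
def hdStep {X Y O : Type} (tA : HDTree X O) (tB : HDTree Y O) (x : X) (y : Y)
    (ab : Bool × Bool) : HDTree X O × HDTree Y O :=
  match tA, tB with
  | HDTree.node actA chA, HDTree.node actB chB =>
      ⟨match actA x with
        | some b => chA true b
        | none => chA false ((actB y).getD ab.1),
       match actB y with
        | some b => chB true b
        | none => chB false ((actA x).getD ab.2)⟩
  | tA, tB => (tA, tB)

/-- Running a half-duplex execution for `d` rounds against the adversary `adv`. -/
def hdRun {X Y O : Type} :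
    ℕ → (ℕ → Bool × Bool) → HDTree X O → HDTree Y O → X → Y → HDTree X O × HDTree Y O
  | 0, _, tA, tB, _, _ => (tA, tB)
  | d + 1, adv, tA, tB, x, y =>
      hdRun d (fun i => adv (i + 1)) (hdStep tA tB x y (adv 0)).1 (hdStep tA tB x y (adv 0)).2 x y

/-- The current round is classical: exactly one of the players sends. -/
def ClassicalRound {X Y O : Type} (tA : HDTree X O) (tB : HDTree Y O) (x : X) (y : Y) : Prop :=
  match tA, tB with
  | HDTree.node actA _, HDTree.node actB _ => (actA x).isSome ≠ (actB y).isSome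
  | _, _ => True

/-- All rounds of the `d`-round execution on `(x, y)` against `adv` are classical. -/
def AllClassical {X Y O : Type} :
    ℕ → (ℕ → Bool × Bool) → HDTree X O → HDTree Y O → X → Y → Prop
  | 0, _, _, _, _, _ => True
  | d + 1, adv, tA, tB, x, y =>
      ClassicalRound tA tB x y ∧
        AllClassical d (fun i => adv (i + 1)) (hdStep tA tB x y (adv 0)).1
          (hdStep tA tB x y (adv 0)).2 x y

/-- A half-duplex protocol of depth `d`: a pair of full 4-ary trees of depth `d`. -/
structure HDProt (X Y O : Type) (d : ℕ) where
  alice : HDTree X O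
  bob : HDTree Y O
  fullA : alice.IsFull d
  fullB : bob.IsFull d

namespace HDProt

variable {X Y O : Type} {d : ℕ}

/-- The protocol solves the relation `R`: in every execution against every adversary,
both players reach leaves labeled with a common output that is valid for the inputs. -/
def Solves (P : HDProt X Y O d) (R : X → Y → O → Prop) : Prop :=
  ∀ x y adv, ∃ o : O,
    (hdRun d adv P.alice P.bob x y).1 = HDTree.leaf o ∧
    (hdRun d adv P.alice P.bob x y).2 = HDTree.leaf o ∧ R x y o

/-- The protocol is partially half-duplex with respect to the function parts
`gA`, `gB` of the inputs: when `gA x = gB y`, all rounds are classical. -/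
def PartiallyHD {G : Type} (P : HDProt X Y O d) (gA : X → G) (gB : Y → G) : Prop :=
  ∀ x y adv, gA x = gB y → AllClassical d adv P.alice P.bob x y

/-- `tr` is a (possibly partial) transcript of `P`. -/
def IsTranscript (P : HDProt X Y O d) (tr : List Bool) : Prop :=
  (∃ x, P.alice.Cons tr x) ∧ (∃ y, P.bob.Cons tr y)

end HDProt

/-- Partially half-duplex communication complexity of a relation whose inputs carry
function parts `gA`, `gB`. -/
noncomputable def Cphd {X Y O G : Type} (R : X → Y → O → Prop)
    (gA : X → G) (gB : Y → G) : ℕ :=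
  sInf {d | ∃ P : HDProt X Y O d, P.Solves R ∧ P.PartiallyHD gA gB}

/-! ### Transcript sets for multiplexor protocols (half-duplex version) -/

section MuxSetsHD

variable {m n : ℕ} {f : BFunc m} {O : Type} {d : ℕ}

/-- `X_π(g)`: the matrices `X` such that Alice's input `(g, X)` is consistent with `tr`. -/
def XpiHD (P : HDProt (AliceMux m n f) (BobMux m n f) O d) (tr : List Bool)
    (g : BFunc n) : Set (BMat m n) :=
  {X | ∃ h : compFG f g X = true, P.alice.Cons tr ⟨(g, X), h⟩}

/-- `Y_π(g)`: the matrices `Y` such that Bob's input `(g, Y)` is consistent with `tr`. -/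
def YpiHD (P : HDProt (AliceMux m n f) (BobMux m n f) O d) (tr : List Bool)
    (g : BFunc n) : Set (BMat m n) :=
  {Y | ∃ h : compFG f g Y = false, P.bob.Cons tr ⟨(g, Y), h⟩}

/-- `A_π(g)`: the strings `a ∈ f⁻¹(1)` with `X_π(g, a) ≠ ∅`. -/
def ApiHD (P : HDProt (AliceMux m n f) (BobMux m n f) O d) (tr : List Bool)
    (g : BFunc n) : Set (Fin m → Bool) :=
  {a | f a = true ∧ (XpiHD P tr g ∩ ginv g a).Nonempty}

/-- `B_π(g)`: the strings `b ∈ f⁻¹(0)` with `Y_π(g, b) ≠ ∅`. -/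
def BpiHD (P : HDProt (AliceMux m n f) (BobMux m n f) O d) (tr : List Bool)
    (g : BFunc n) : Set (Fin m → Bool) :=
  {b | f b = false ∧ (YpiHD P tr g ∩ ginv g b).Nonempty}

/-- `V_π` (version via nonempty `X_π(g)` and `Y_π(g)`). -/
def VpiHD (P : HDProt (AliceMux m n f) (BobMux m n f) O d) (tr : List Bool) :
    Set (BFunc n) :=
  {g | (XpiHD P tr g).Nonempty ∧ (YpiHD P tr g).Nonempty}

/-- `V_π` (version via nonempty `A_π(g)` and `B_π(g)`). -/
def VpiABHD (P : HDProt (AliceMux m n f) (BobMux m n f) O d) (tr : List Bool) :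
    Set (BFunc n) :=
  {g | (ApiHD P tr g).Nonempty ∧ (BpiHD P tr g).Nonempty}

/-- A transcript `tr` of `P` is `γ`-alive (with the universal constant `κ = 8`). -/
def AliveHD (γ : ℝ) (P : HDProt (AliceMux m n f) (BobMux m n f) O d)
    (tr : List Bool) : Prop :=
  P.IsTranscript tr ∧
  ∃ V : Set (BFunc n), V ⊆ VpiABHD P tr ∧ (∀ g ∈ V, IsBalanced g) ∧
    ((2 : ℝ) ^ (-(m : ℝ)) * ((BalancedFuncs n).ncard : ℝ) ≤ (V.ncard : ℝ)) ∧
    (∀ g ∈ V,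
      (1 - γ) * m + 8 * Real.logb 2 m + 8 ≤
        Real.logb 2 (Lrect (ApiHD P tr g) (BpiHD P tr g))) ∧
    (∀ g ∈ V, ∀ a ∈ ApiHD P tr g,
      (2 : ℝ) ^ (-γ * m + 1) * ((ginv g a).ncard : ℝ) ≤
        ((XpiHD P tr g ∩ ginv g a).ncard : ℝ)) ∧
    (∀ g ∈ V, ∀ b ∈ BpiHD P tr g,
      (2 : ℝ) ^ (-γ * m + 1) * ((ginv g b).ncard : ℝ) ≤
        ((YpiHD P tr g ∩ ginv g b).ncard : ℝ))

/-- The weak intersection property for two functions `gA`, `gB`. -/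
def WeakIntersectHD (P : HDProt (AliceMux m n f) (BobMux m n f) O d) (tr : List Bool)
    (gA gB : BFunc n) : Prop :=
  ∃ X ∈ XpiHD P tr gA, ∃ Y ∈ YpiHD P tr gB,
    ∀ i : Fin m, gA (X i) ≠ gB (Y i) → X i = Y i

/-- The characteristic graph of `tr` for `KW_f ⋄ MUX_n`, on vertex set `V`. -/
def charGraphDiamHD (P : HDProt (AliceMux m n f) (BobMux m n f) O d) (tr : List Bool)
    (V : Set (BFunc n)) : SimpleGraph ↥V where
  Adj gA gB := gA ≠ gB ∧
    ((XpiHD P tr ↑gA ∩ YpiHD P tr ↑gB).Nonempty ∨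
      (XpiHD P tr ↑gB ∩ YpiHD P tr ↑gA).Nonempty)
  symm := by
    constructor
    rintro a b ⟨hne, h⟩
    exact ⟨hne.symm, h.symm⟩
  loopless := by
    constructor
    rintro a ⟨hne, -⟩
    exact hne rfl

/-- The characteristic graph of `tr` for `KW_f ⊛ MUX_n`, on vertex set `V`. -/
def charGraphStrongHD (P : HDProt (AliceMux m n f) (BobMux m n f) O d) (tr : List Bool)
    (V : Set (BFunc n)) : SimpleGraph ↥V where
  Adj gA gB := gA ≠ gB ∧
    (WeakIntersectHD P tr ↑gA ↑gB ∨ WeakIntersectHD P tr ↑gB ↑gA)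
  symm := by
    constructor
    rintro a b ⟨hne, h⟩
    exact ⟨hne.symm, h.symm⟩
  loopless := by
    constructor
    rintro a ⟨hne, -⟩
    exact hne rfl

end MuxSetsHD

/-! ### Transcript sets for multiplexor protocols (standard deterministic version) -/

section MuxSetsP

variable {m n : ℕ} {f : BFunc m} {O : Type}

/-- `X_π(g)` for a standard deterministic protocol. -/
def XpiP (p : Prot (AliceMux m n f) (BobMux m n f) O) (tr : List Bool)
    (g : BFunc n) : Set (BMat m n) :=
  {X | ∃ h : compFG f g X = true, Prot.ConsA p tr ⟨(g, X), h⟩}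

/-- `Y_π(g)` for a standard deterministic protocol. -/
def YpiP (p : Prot (AliceMux m n f) (BobMux m n f) O) (tr : List Bool)
    (g : BFunc n) : Set (BMat m n) :=
  {Y | ∃ h : compFG f g Y = false, Prot.ConsB p tr ⟨(g, Y), h⟩}

/-- `A_π(g)` for a standard deterministic protocol. -/
def ApiP (p : Prot (AliceMux m n f) (BobMux m n f) O) (tr : List Bool)
    (g : BFunc n) : Set (Fin m → Bool) :=
  {a | f a = true ∧ (XpiP p tr g ∩ ginv g a).Nonempty}

/-- `B_π(g)` for a standard deterministic protocol. -/
def BpiP (p : Prot (AliceMux m n f) (BobMux m n f) O) (tr : List Bool)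
    (g : BFunc n) : Set (Fin m → Bool) :=
  {b | f b = false ∧ (YpiP p tr g ∩ ginv g b).Nonempty}

/-- `V_π` (version via nonempty `X_π(g)` and `Y_π(g)`), standard protocols. -/
def VpiPset (p : Prot (AliceMux m n f) (BobMux m n f) O) (tr : List Bool) :
    Set (BFunc n) :=
  {g | (XpiP p tr g).Nonempty ∧ (YpiP p tr g).Nonempty}

/-- `V_π` (version via nonempty `A_π(g)` and `B_π(g)`), standard protocols. -/
def VpiABP (p : Prot (AliceMux m n f) (BobMux m n f) O) (tr : List Bool) :
    Set (BFunc n) :=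
  {g | (ApiP p tr g).Nonempty ∧ (BpiP p tr g).Nonempty}

/-- `γ`-alive transcripts (with `κ = 8`), standard protocols. -/
def AliveP (γ : ℝ) (p : Prot (AliceMux m n f) (BobMux m n f) O)
    (tr : List Bool) : Prop :=
  p.IsTranscript tr ∧
  ∃ V : Set (BFunc n), V ⊆ VpiABP p tr ∧ (∀ g ∈ V, IsBalanced g) ∧
    ((2 : ℝ) ^ (-(m : ℝ)) * ((BalancedFuncs n).ncard : ℝ) ≤ (V.ncard : ℝ)) ∧
    (∀ g ∈ V,
      (1 - γ) * m + 8 * Real.logb 2 m + 8 ≤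
        Real.logb 2 (Lrect (ApiP p tr g) (BpiP p tr g))) ∧
    (∀ g ∈ V, ∀ a ∈ ApiP p tr g,
      (2 : ℝ) ^ (-γ * m + 1) * ((ginv g a).ncard : ℝ) ≤
        ((XpiP p tr g ∩ ginv g a).ncard : ℝ)) ∧
    (∀ g ∈ V, ∀ b ∈ BpiP p tr g,
      (2 : ℝ) ^ (-γ * m + 1) * ((ginv g b).ncard : ℝ) ≤
        ((YpiP p tr g ∩ ginv g b).ncard : ℝ))

/-- The weak intersection property, standard protocols. -/
def WeakIntersectP (p : Prot (AliceMux m n f) (BobMux m n f) O) (tr : List Bool)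
    (gA gB : BFunc n) : Prop :=
  ∃ X ∈ XpiP p tr gA, ∃ Y ∈ YpiP p tr gB,
    ∀ i : Fin m, gA (X i) ≠ gB (Y i) → X i = Y i

/-- The characteristic graph for `KW_f ⋄ MUX_n`, standard protocols. -/
def charGraphDiamP (p : Prot (AliceMux m n f) (BobMux m n f) O) (tr : List Bool)
    (V : Set (BFunc n)) : SimpleGraph ↥V where
  Adj gA gB := gA ≠ gB ∧
    ((XpiP p tr ↑gA ∩ YpiP p tr ↑gB).Nonempty ∨
      (XpiP p tr ↑gB ∩ YpiP p tr ↑gA).Nonempty)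
  symm := by
    constructor
    rintro a b ⟨hne, h⟩
    exact ⟨hne.symm, h.symm⟩
  loopless := by
    constructor
    rintro a ⟨hne, -⟩
    exact hne rfl

/-- The characteristic graph for `KW_f ⊛ MUX_n`, standard protocols. -/
def charGraphStrongP (p : Prot (AliceMux m n f) (BobMux m n f) O) (tr : List Bool)
    (V : Set (BFunc n)) : SimpleGraph ↥V where
  Adj gA gB := gA ≠ gB ∧
    (WeakIntersectP p tr ↑gA ↑gB ∨ WeakIntersectP p tr ↑gB ↑gA)
  symm := by
    constructor
    rintro a b ⟨hne, h⟩
    exact ⟨hne.symm, h.symm⟩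
  loopless := by
    constructor
    rintro a ⟨hne, -⟩
    exact hne rfl

end MuxSetsP

/-! ### Prefix-thick sets, branching structures and winning sets -/

/-- A set of strings indexed by a linearly ordered set `I` is prefix thick with
degree `t`: it has a nonempty subset whose prefix tree has minimum degree
greater than `t` (the children of the depth-`i` vertex given by the prefix of
`x ∈ S'` are the possible values of the next coordinate among elements of `S'`
agreeing with `x` on all earlier coordinates). -/
def RowThick {I A : Type} [LT I] (S : Set (I → A)) (t : ℝ) : Prop :=
  ∃ S' : Set (I → A), S' ⊆ S ∧ S'.Nonempty ∧ ∀ x ∈ S', ∀ i : I,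
    t < (({a : A | ∃ y ∈ S', (∀ j, j < i → y j = x j) ∧ y i = a}).ncard : ℝ)

/-- Prefix thickness for strings over (possibly different) alphabets `A i`,
with a separate degree bound `t i` at each depth. -/
def DepThick {m : ℕ} {A : Fin m → Type} (S : Set (∀ i, A i)) (t : Fin m → ℝ) : Prop :=
  ∃ S' : Set (∀ i, A i), S' ⊆ S ∧ S'.Nonempty ∧ ∀ x ∈ S', ∀ i : Fin m,
    t i < (({a : A i | ∃ y ∈ S', (∀ j, j < i → y j = x j) ∧ y i = a}).ncard : ℝ)

/-- The restriction of a set of matrices to the rows in `I` (ordered as in `[m]`). -/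
def restrictRows {m n : ℕ} (I : Finset (Fin m)) (S : Set (BMat m n)) :
    Set (↥I → (Fin n → Bool)) :=
  (fun X => fun i : ↥I => X i.1) '' S

/-- The restriction of a set of strings to the coordinates in `I` (ordered as in `[m]`). -/
def restrictStr {m : ℕ} {A : Type} (I : Finset (Fin m)) (S : Set (Fin m → A)) :
    Set (↥I → A) :=
  (fun x => fun i : ↥I => x i.1) '' S

/-- `w` is a branching structure of `S`: some nonempty subset `S' ⊆ S` has a prefix
tree in which every vertex at depth `i` has exactly `w i` children. -/
def IsBranching {m : ℕ} {A : Type} (S : Set (Fin m → A)) (w : Fin m → ℕ) : Prop :=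
  ∃ S' : Set (Fin m → A), S' ⊆ S ∧ S'.Nonempty ∧ ∀ x ∈ S', ∀ i : Fin m,
    ({a : A | ∃ y ∈ S', (∀ j, j < i → y j = x j) ∧ y i = a}).ncard = w i

/-- The winning set of `S`: the set of its branching structures. -/
def WinSet {m : ℕ} {A : Type} (S : Set (Fin m → A)) : Set (Fin m → ℕ) :=
  {w | IsBranching S w}

/-! ### Non-deterministic communication complexity -/

/-- There is a non-deterministic protocol for the total function `f` with
witness set of size `k`. -/
def NDProtFor {X Y : Type} (f : X × Y → Bool) (k : ℕ) : Prop :=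
  ∃ a : X → Fin k → Bool, ∃ b : Y → Fin k → Bool,
    ∀ x y, f (x, y) = true ↔ ∃ w, a x w = true ∧ b y w = true

/-- The minimal size of a (nonempty) witness set of a non-deterministic protocol for `f`;
the non-deterministic communication complexity `NCC(f)` is its base-2 logarithm. -/
noncomputable def NCCcard {X Y : Type} (f : X × Y → Bool) : ℕ :=
  sInf {k | 1 ≤ k ∧ NDProtFor f k}

/-- A non-deterministic protocol for the partial problem `GraphIneq_G` with witness
set of size `k`: adjacent pairs are accepted, equal pairs are rejected. -/
def GraphIneqProt {V : Type} (G : SimpleGraph V) (k : ℕ) : Prop :=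
  ∃ a : V → Fin k → Bool, ∃ b : V → Fin k → Bool,
    (∀ u v, G.Adj u v → ∃ w, a u w = true ∧ b v w = true) ∧
    (∀ v, ¬ ∃ w, a v w = true ∧ b v w = true)

/-- The minimal witness-set size of a non-deterministic protocol for `GraphIneq_G`;
`NCC(GraphIneq_G)` is its base-2 logarithm. -/
noncomputable def NCCgraphIneqCard {V : Type} (G : SimpleGraph V) : ℕ :=
  sInf {k | 1 ≤ k ∧ GraphIneqProt G k}

/-- `S` is an independent set of `G`. -/
def IndepIn {V : Type} (G : SimpleGraph V) (S : Set V) : Prop :=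
  ∀ u ∈ S, ∀ v ∈ S, ¬ G.Adj u v

namespace Prot

variable {X Y W : Type}

def next (b : Bool) : Prot X Y W → Prot X Y W
  | leaf o => leaf o
  | alice _ c => c b
  | bob _ c => c b

def bit : Prot X Y W → X → Y → Bool
  | leaf _, _, _ => false
  | alice s _, x, _ => s x
  | bob s _, _, y => s y

/-- At a leaf Alice keeps sending a dummy bit, so that a synchronized simulation only has
classical rounds. -/
def actA : Prot X Y W → X → Option Bool
  | leaf _, _ => some false
  | alice s _, x => some (s x)
  | bob _ _, _ => none

def actB : Prot X Y W → Y → Option Bool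
  | bob s _, y => some (s y)
  | _, _ => none

def label [Inhabited W] : Prot X Y W → W
  | leaf o => o
  | _ => default

lemma run_next_bit (p : Prot X Y W) (x : X) (y : Y) :
    (p.next (p.bit x y)).run x y = p.run x y := by
  cases p <;> rfl

lemma depth_next_le (p : Prot X Y W) (b : Bool) : (p.next b).depth ≤ p.depth - 1 := by
  cases p <;> cases b <;> simp [next, depth]

lemma eq_leaf_run_of_depth_eq_zero {p : Prot X Y W} (hp : p.depth = 0) (x : X) (y : Y) :
    p = leaf (p.run x y) := by
  cases p <;> simp_all [depth, run]

def comap {U V : Type} (u : X → Option U) (v : Y → Option V) : Prot U V W → Prot X Y W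
  | leaf o => leaf o
  | alice s c => alice (fun x => (u x).elim false s) fun b => (c b).comap u v
  | bob s c => bob (fun y => (v y).elim false s) fun b => (c b).comap u v

lemma depth_comap {U V : Type} (u : X → Option U) (v : Y → Option V) (p : Prot U V W) :
    (p.comap u v).depth = p.depth := by
  induction p <;> simp_all [comap, depth]

lemma run_comap {U V : Type} {u : X → Option U} {v : Y → Option V} (p : Prot U V W)
    {x : X} {y : Y} {x' : U} {y' : V} (hx : u x = some x') (hy : v y = some y') :
    (p.comap u v).run x y = p.run x' y' := by
  induction p with
  | leaf o => rfl
  | alice s c ih => simp only [comap, run, hx, Option.elim, ih]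
  | bob s c ih => simp only [comap, run, hy, Option.elim, ih]

def dispatchA [DecidableEq X] (p : X → Prot X Y W) (q : Prot X Y W) : List X → Prot X Y W
  | [] => q
  | x₀ :: l => alice (fun x => decide (x = x₀)) fun b => if b then p x₀ else dispatchA p q l

def dispatchB [DecidableEq Y] (p : Y → Prot X Y W) (q : Prot X Y W) : List Y → Prot X Y W
  | [] => q
  | y₀ :: l => bob (fun y => decide (y = y₀)) fun b => if b then p y₀ else dispatchB p q l

lemma run_dispatchA [DecidableEq X] (p : X → Prot X Y W) (q : Prot X Y W) {l : List X}
    {x : X} (hx : x ∈ l) (y : Y) : (dispatchA p q l).run x y = (p x).run x y := by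
  induction l with
  | nil => simp at hx
  | cons x₀ l ih =>
    by_cases h : x = x₀
    · subst h; simp [dispatchA, run]
    · simp_all [dispatchA, run]

lemma run_dispatchB [DecidableEq Y] (p : Y → Prot X Y W) (q : Prot X Y W) {l : List Y}
    (x : X) {y : Y} (hy : y ∈ l) : (dispatchB p q l).run x y = (p y).run x y := by
  induction l with
  | nil => simp at hy
  | cons y₀ l ih =>
    by_cases h : y = y₀
    · subst h; simp [dispatchB, run]
    · simp_all [dispatchB, run]

theorem exists_solves [Finite X] [Finite Y] [Nonempty W] {R : X → Y → W → Prop}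
    (hR : ∀ x y, ∃ o, R x y o) : ∃ p : Prot X Y W, p.Solves R := by
  classical
  have := Fintype.ofFinite X
  have := Fintype.ofFinite Y
  choose o ho using hR
  let q : Prot X Y W := leaf (Classical.arbitrary W)
  refine ⟨dispatchA (fun x => dispatchB (fun y => leaf (o x y)) q Finset.univ.toList) q
    Finset.univ.toList, fun x y => ?_⟩
  rw [run_dispatchA _ _ (by simp), run_dispatchB _ _ _ (by simp)]
  exact ho x y

theorem exists_depth_eq_CC {R : X → Y → W → Prop} (h : ∃ p : Prot X Y W, p.Solves R) :
    ∃ p : Prot X Y W, p.Solves R ∧ p.depth = CC R := by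
  obtain ⟨p, hp⟩ := h
  exact Nat.sInf_mem (s := {d | ∃ p : Prot X Y W, p.Solves R ∧ p.depth = d}) ⟨_, p, hp, rfl⟩

end Prot

def Transmits (a b : Option Bool) (v : Bool) : Prop :=
  a = some v ∧ b = none ∨ a = none ∧ b = some v

lemma Prot.transmits_act {X Y W : Type} (p : Prot X Y W) (x : X) (y : Y) :
    Transmits (p.actA x) (p.actB y) (p.bit x y) := by
  cases p <;> simp [Transmits, Prot.actA, Prot.actB, Prot.bit]

section HalfDuplex

variable {X Y O : Type}

lemma hdStep_node (actA : X → Option Bool) (actB : Y → Option Bool)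
    (cA : Bool → HDTree X O) (cB : Bool → HDTree Y O) (x : X) (y : Y) (ab : Bool × Bool) :
    hdStep (.node actA fun _ b => cA b) (.node actB fun _ b => cB b) x y ab =
      (cA ((actA x).getD ((actB y).getD ab.1)), cB ((actB y).getD ((actA x).getD ab.2))) := by
  simp only [hdStep]
  cases actA x <;> cases actB y <;> rfl

lemma hdStep_node_of_transmits {actA : X → Option Bool} {actB : Y → Option Bool}
    (cA : Bool → HDTree X O) (cB : Bool → HDTree Y O) {x : X} {y : Y} {v : Bool}
    (h : Transmits (actA x) (actB y) v) (ab : Bool × Bool) :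
    hdStep (.node actA fun _ b => cA b) (.node actB fun _ b => cB b) x y ab = (cA v, cB v) := by
  rw [hdStep_node]
  rcases h with ⟨ha, hb⟩ | ⟨ha, hb⟩ <;> simp [ha, hb]

lemma classicalRound_node_of_transmits {actA : X → Option Bool} {actB : Y → Option Bool}
    (cA : Bool → Bool → HDTree X O) (cB : Bool → Bool → HDTree Y O) {x : X} {y : Y}
    {v : Bool} (h : Transmits (actA x) (actB y) v) :
    ClassicalRound (.node actA cA) (.node actB cB) x y := by
  rcases h with ⟨ha, hb⟩ | ⟨ha, hb⟩ <;> simp [ClassicalRound, ha, hb]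

lemma hdRun_add (a b : ℕ) (adv : ℕ → Bool × Bool) (tA : HDTree X O) (tB : HDTree Y O)
    (x : X) (y : Y) :
    hdRun (a + b) adv tA tB x y =
      hdRun b (fun i => adv (i + a)) (hdRun a adv tA tB x y).1 (hdRun a adv tA tB x y).2 x y := by
  induction a generalizing adv tA tB with
  | zero => simp [hdRun]
  | succ a ih =>
    rw [Nat.succ_add, hdRun, hdRun, ih]
    simp only [Nat.add_assoc]

lemma allClassical_add (a b : ℕ) (adv : ℕ → Bool × Bool) (tA : HDTree X O) (tB : HDTree Y O)
    (x : X) (y : Y) (h₁ : AllClassical a adv tA tB x y)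
    (h₂ : AllClassical b (fun i => adv (i + a)) (hdRun a adv tA tB x y).1
      (hdRun a adv tA tB x y).2 x y) :
    AllClassical (a + b) adv tA tB x y := by
  induction a generalizing adv tA tB with
  | zero => simpa [hdRun] using h₂
  | succ a ih =>
    rw [Nat.succ_add]
    refine ⟨h₁.1, ih _ _ _ h₁.2 ?_⟩
    simpa only [hdRun, Nat.add_assoc, Nat.add_comm 1] using h₂

end HalfDuplex

namespace HDTree

variable {X Y O : Type}

/-- The player acts on the history of bits seen so far in this phase, oldest first. -/
def ofStrategy (act : List Bool → X → Option Bool) (out : List Bool → O) : ℕ → HDTree X O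
  | 0 => leaf (out [])
  | k + 1 => node (act []) fun _ b => ofStrategy (fun h => act (b :: h)) (fun h => out (b :: h)) k

lemma isFull_ofStrategy (act : List Bool → X → Option Bool) (out : List Bool → O) (k : ℕ) :
    (ofStrategy act out k).IsFull k := by
  induction k generalizing act out with
  | zero => exact .leaf _
  | succ k ih => exact .node fun _ _ => ih _ _

lemma hdRun_ofStrategy {actA : List Bool → X → Option Bool}
    {actB : List Bool → Y → Option Bool}
    (outA : List Bool → O) (outB : List Bool → O) {x : X} {y : Y} {l : List Bool}
    (hl : ∀ i (hi : i < l.length), Transmits (actA (l.take i) x) (actB (l.take i) y) l[i])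
    (adv : ℕ → Bool × Bool) :
    hdRun l.length adv (ofStrategy actA outA l.length) (ofStrategy actB outB l.length) x y =
        (leaf (outA l), leaf (outB l)) ∧
      AllClassical l.length adv (ofStrategy actA outA l.length) (ofStrategy actB outB l.length)
        x y := by
  induction l generalizing actA actB outA outB adv with
  | nil => exact ⟨rfl, trivial⟩
  | cons v l ih =>
    have h₀ : Transmits (actA [] x) (actB [] y) v := hl 0 (by simp)
    have hstep := hdStep_node_of_transmits
      (fun b => ofStrategy (fun h => actA (b :: h)) (fun h => outA (b :: h)) l.length)
      (fun b => ofStrategy (fun h => actB (b :: h)) (fun h => outB (b :: h)) l.length) h₀ (adv 0)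
    obtain ⟨hrun, hcl⟩ := ih (actA := fun h => actA (v :: h)) (actB := fun h => actB (v :: h))
      (fun h => outA (v :: h)) (fun h => outB (v :: h))
      (fun i hi => hl (i + 1) (by simpa using hi)) (fun i => adv (i + 1))
    simp only [List.length_cons, ofStrategy, hdRun, AllClassical, hstep]
    exact ⟨hrun, classicalRound_node_of_transmits _ _ h₀, hcl⟩

/-- The state assigns to each input of the player its current subprotocol; `fin` continues
from the final states. -/
def simulate {Z U V W : Type} (act : Prot U V W → Z → Option Bool)
    (fin : (Z → Prot U V W) → HDTree Z O) : ℕ → (Z → Prot U V W) → HDTree Z O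
  | 0, st => fin st
  | k + 1, st => node (fun z => act (st z) z) fun _ b => simulate act fin k fun z => (st z).next b

lemma isFull_simulate {Z U V W : Type} (act : Prot U V W → Z → Option Bool)
    {fin : (Z → Prot U V W) → HDTree Z O} {c : ℕ} (hfin : ∀ st, (fin st).IsFull c) (k : ℕ)
    (st : Z → Prot U V W) : (simulate act fin k st).IsFull (k + c) := by
  induction k generalizing st with
  | zero => simpa [simulate] using hfin st
  | succ k ih =>
    rw [Nat.succ_add]
    exact .node fun _ _ => ih _

section Simulation

variable {W : Type} {actA : Prot X Y W → X → Option Bool}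
  {actB : Prot X Y W → Y → Option Bool}
  {finA : (X → Prot X Y W) → HDTree X O} {finB : (Y → Prot X Y W) → HDTree Y O}

lemma hdRun_simulate (k : ℕ) (adv : ℕ → Bool × Bool) (stA : X → Prot X Y W)
    (stB : Y → Prot X Y W) (x : X) (y : Y) :
    ∃ stA' stB', hdRun k adv (simulate actA finA k stA) (simulate actB finB k stB) x y =
      (finA stA', finB stB') := by
  induction k generalizing adv stA stB with
  | zero => exact ⟨stA, stB, rfl⟩
  | succ k ih =>
    simp only [simulate, hdRun, hdStep_node]
    exact ih _ _ _

lemma hdRun_simulate_of_eq (k : ℕ) (adv : ℕ → Bool × Bool) {stA : X → Prot X Y W}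
    {stB : Y → Prot X Y W} {x : X} {y : Y} (hst : stA x = stB y) (hd : (stA x).depth ≤ k) :
    (∃ stA' stB',
        hdRun k adv (simulate Prot.actA finA k stA) (simulate Prot.actB finB k stB) x y =
          (finA stA', finB stB') ∧ stA' x = .leaf ((stA x).run x y)) ∧
      AllClassical k adv (simulate Prot.actA finA k stA) (simulate Prot.actB finB k stB) x y := by
  induction k generalizing adv stA stB with
  | zero =>
    exact ⟨⟨stA, stB, rfl, Prot.eq_leaf_run_of_depth_eq_zero (by omega) x y⟩, trivial⟩
  | succ k ih =>
    set v := (stA x).bit x y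
    have hv : Transmits ((stA x).actA x) ((stB y).actB y) v := hst ▸ (stA x).transmits_act x y
    have hstep : hdStep (simulate Prot.actA finA (k + 1) stA)
        (simulate Prot.actB finB (k + 1) stB) x y (adv 0) =
          (simulate Prot.actA finA k fun z => (stA z).next v,
            simulate Prot.actB finB k fun z => (stB z).next v) :=
      hdStep_node_of_transmits _ _ hv _
    obtain ⟨⟨stA', stB', hrun, hleaf⟩, hcl⟩ := ih (fun i => adv (i + 1))
      (stA := fun z => (stA z).next v) (stB := fun z => (stB z).next v) (by simp only [hst])
      (by have := (stA x).depth_next_le v; omega)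
    refine ⟨⟨stA', stB', ?_, ?_⟩, classicalRound_node_of_transmits _ _ hv, ?_⟩
    · rwa [hdRun, hstep]
    · rw [hleaf, Prot.run_next_bit]
    · rwa [hstep]

end Simulation

/-- Alice sends the `k` bits of `msg x`, then Bob answers with the bit `reply y (msg x)`. -/
def verifyA (msg : X → List Bool) (out : List Bool → O) (k : ℕ) : HDTree X O :=
  ofStrategy (fun h x => (msg x)[h.length]?) out (k + 1)

def verifyB (reply : Y → List Bool → Bool) (out : List Bool → O) (k : ℕ) : HDTree Y O :=
  ofStrategy (fun h y => if h.length = k then some (reply y h) else none) out (k + 1)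

lemma hdRun_verify {msg : X → List Bool} (reply : Y → List Bool → Bool)
    (out : List Bool → O) {k : ℕ} {x : X} (hx : (msg x).length = k) (y : Y)
    (adv : ℕ → Bool × Bool) :
    hdRun (k + 1) adv (verifyA msg out k) (verifyB reply out k) x y =
        (leaf (out (msg x ++ [reply y (msg x)])), leaf (out (msg x ++ [reply y (msg x)]))) ∧
      AllClassical (k + 1) adv (verifyA msg out k) (verifyB reply out k) x y := by
  have hlen : (msg x ++ [reply y (msg x)]).length = k + 1 := by simp [hx]
  rw [verifyA, verifyB, ← hlen]
  refine hdRun_ofStrategy out out (fun i hi => ?_) adv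
  rcases Nat.lt_or_ge i k with hik | hik
  · left
    simp [List.take_append, hx, hik, hik.ne, Nat.min_eq_left hik.le,
      Nat.sub_eq_zero_of_le hik.le, List.getElem_append_left]
  · have hik : i = k := by simp at hi; omega
    subst hik
    right
    simp [hx]

end HDTree

section PartiallyHalfDuplex

variable {X Y O G : Type} {R : X → Y → O → Prop} {gA : X → G} {gB : Y → G}

theorem Cphd_eq_zero_of_forall (o : O) (hR : ∀ x y, R x y o) : Cphd R gA gB = 0 :=
  Nat.le_zero.mp <| Nat.sInf_le
    ⟨⟨.leaf o, .leaf o, .leaf o, .leaf o⟩, fun x y _ => ⟨o, rfl, rfl, hR x y⟩,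
      fun _ _ _ _ => trivial⟩

/-- Both players simulate `Q` on their own function part, then Alice sends a `k`-bit
certificate of her simulated output, which Bob accepts or rejects with one bit. -/
theorem Cphd_le_of_simulate_verify {W : Type} [Inhabited W] (Q : G → Prot X Y W) {D : ℕ}
    (hQ : ∀ g, (Q g).depth ≤ D) {k : ℕ} (cert : X → W → List Bool)
    (hcert : ∀ x w, (cert x w).length = k) (accept : Y → List Bool → Bool)
    (claim : List Bool → O) (reject : O)
    (hreject : ∀ x y, gA x ≠ gB y → R x y reject)
    (hsound : ∀ x y w, accept y (cert x w) = true → R x y (claim (cert x w)))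
    (hcomplete : ∀ x y, gA x = gB y → accept y (cert x ((Q (gA x)).run x y)) = true) :
    Cphd R gA gB ≤ D + (k + 1) := by
  let out : List Bool → O := fun l => if l.getD k false then claim (l.take k) else reject
  have hout : ∀ c r, c.length = k → out (c ++ [r]) = if r then claim c else reject := by
    rintro c r rfl
    simp [out]
  let finA : (X → Prot X Y W) → HDTree X O := fun st =>
    HDTree.verifyA (fun x => cert x (st x).label) out k
  let finB : (Y → Prot X Y W) → HDTree Y O := fun _ => HDTree.verifyB accept out k
  have hverify : ∀ x y adv stA stB,
      hdRun (k + 1) adv (finA stA) (finB stB) x y =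
          (.leaf (out (cert x (stA x).label ++ [accept y (cert x (stA x).label)])),
            .leaf (out (cert x (stA x).label ++ [accept y (cert x (stA x).label)]))) ∧
        AllClassical (k + 1) adv (finA stA) (finB stB) x y :=
    fun x y adv stA _ => HDTree.hdRun_verify (msg := fun x => cert x (stA x).label) accept out
      (hcert _ _) y adv
  let P : HDProt X Y O (D + (k + 1)) :=
    ⟨HDTree.simulate Prot.actA finA D fun x => Q (gA x),
      HDTree.simulate Prot.actB finB D fun y => Q (gB y),
      HDTree.isFull_simulate _ (fun _ => HDTree.isFull_ofStrategy _ _ _) _ _,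
      HDTree.isFull_simulate _ (fun _ => HDTree.isFull_ofStrategy _ _ _) _ _⟩
  refine Nat.sInf_le ⟨P, fun x y adv => ?_, fun x y adv hg => ?_⟩
  · rw [hdRun_add]
    by_cases hg : gA x = gB y
    · obtain ⟨⟨stA, stB, hrun, hleaf⟩, -⟩ :=
        HDTree.hdRun_simulate_of_eq (finA := finA) (finB := finB) D adv
          (stA := fun x => Q (gA x)) (stB := fun y => Q (gB y)) (congrArg Q hg) (hQ _)
      rw [hrun, (hverify x y _ stA stB).1, hout _ _ (hcert _ _), hleaf, Prot.label,
        if_pos (hcomplete x y hg)]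
      exact ⟨_, rfl, rfl, hsound x y _ (hcomplete x y hg)⟩
    · obtain ⟨stA, stB, hrun⟩ := HDTree.hdRun_simulate (finA := finA) (finB := finB) D adv
        (fun x => Q (gA x)) (fun y => Q (gB y)) x y
      rw [hrun, (hverify x y _ stA stB).1, hout _ _ (hcert _ _)]
      refine ⟨_, rfl, rfl, ?_⟩
      split_ifs with hacc
      exacts [hsound x y _ hacc, hreject x y hg]
  · obtain ⟨⟨stA, stB, hrun, -⟩, hcl⟩ :=
      HDTree.hdRun_simulate_of_eq (finA := finA) (finB := finB) D adv
        (stA := fun x => Q (gA x)) (stB := fun y => Q (gB y)) (congrArg Q hg) (hQ _)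
    refine allClassical_add _ _ _ _ _ _ _ hcl ?_
    rw [hrun]
    exact (hverify x y _ stA stB).2

end PartiallyHalfDuplex

lemma exists_listEncoding (M : Type) [Fintype M] :
    ∃ enc : M → List Bool,
      Function.Injective enc ∧ ∀ c, (enc c).length = Nat.clog 2 (Fintype.card M) := by
  obtain ⟨e⟩ : Nonempty (M ↪ (Fin (Nat.clog 2 (Fintype.card M)) → Bool)) :=
    Function.Embedding.nonempty_of_card_le (by simpa using Nat.le_pow_clog one_lt_two _)
  exact ⟨fun c => List.ofFn (e c), List.ofFn_injective.comp e.injective, fun c => by simp⟩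

lemma natCast_clog_two_lt_logb_add_one (N : ℕ) : (Nat.clog 2 N : ℝ) < Real.logb 2 N + 1 := by
  have hN : 0 ≤ Real.logb 2 N := by
    rcases N.eq_zero_or_pos with rfl | hN
    · simp
    · exact Real.logb_nonneg one_lt_two (by exact_mod_cast hN)
  have := Real.natCeil_logb_natCast 2 N
  push_cast at this
  rw [← this]
  exact Nat.ceil_lt_add_one hN

section Mux

variable {m n : ℕ} {f : BFunc m}

lemma exists_row_ne_of_compFG {g : BFunc n} {X Y : BMat m n} (hX : compFG f g X = true)
    (hY : compFG f g Y = false) : ∃ i, g (X i) ≠ g (Y i) := by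
  by_contra! h
  have : compFG f g X = compFG f g Y := congrArg f (funext h)
  simp_all

lemma exists_KWstrong (g : BFunc n) (X : {X : BMat m n // compFG f g X = true})
    (Y : {Y : BMat m n // compFG f g Y = false}) : ∃ o, KWstrong f g X Y o := by
  obtain ⟨i, hi⟩ := exists_row_ne_of_compFG X.2 Y.2
  obtain ⟨j, hj⟩ := Function.ne_iff.mp fun h : X.1 i = Y.1 i => hi (congrArg g h)
  exact ⟨(i, j), hj, hi⟩

/-- With `m * n = 0` there is a single matrix, which cannot be both a 1- and a 0-input. -/
lemma muxGA_ne_muxGB_of_mul_eq_zero (hmn : m * n = 0) (x : AliceMux m n f)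
    (y : BobMux m n f) : muxGA x ≠ muxGB y := by
  intro hg
  have hXY : x.1.2 = y.1.2 := by
    funext i j
    rcases Nat.mul_eq_zero.mp hmn with rfl | rfl
    exacts [i.elim0, j.elim0]
  have hx : compFG f (muxGB y) y.1.2 = true := hg ▸ hXY ▸ x.2
  exact absurd (y.2.symm.trans hx) Bool.false_ne_true

def toKWA (g : BFunc n) (x : AliceMux m n f) : Option {X : BMat m n // compFG f g X = true} :=
  if h : compFG f g x.1.2 = true then some ⟨x.1.2, h⟩ else none

def toKWB (g : BFunc n) (y : BobMux m n f) : Option {Y : BMat m n // compFG f g Y = false} :=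
  if h : compFG f g y.1.2 = false then some ⟨y.1.2, h⟩ else none

variable {P : Type} [Fintype P]
  {R : AliceMux m n f → BobMux m n f → Option (Fin m × Fin n) → Prop}
  {K : (g : BFunc n) → {X : BMat m n // compFG f g X = true} →
    {Y : BMat m n // compFG f g Y = false} → Fin m × Fin n → Prop}
  {payload : BFunc n → BMat m n → Fin m × Fin n → P}
  {check : BFunc n → BMat m n → Fin m × Fin n → P → Bool}

/-- Alice certifies her entry `o` by `payload`, which Bob verifies with `check`. -/
theorem Cphd_mux_le (hmn : 0 < m * n) (hK : ∀ g X Y, ∃ o, K g X Y o) {D : ℕ}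
    (hD : ∀ g, CC (K g) ≤ D)
    (hnone : ∀ x y, muxGA x ≠ muxGB y → R x y none)
    (hsome : ∀ x y o, check (muxGB y) y.1.2 o (payload (muxGA x) x.1.2 o) = true →
      R x y (some o))
    (hcheck : ∀ g X Y o, K g X Y o → check g Y.1 o (payload g X.1 o) = true) :
    Cphd R muxGA muxGB ≤ D + (Nat.clog 2 (m * n * Fintype.card P) + 1) := by
  classical
  have hm : 0 < m := pos_of_mul_pos_left hmn n.zero_le
  have hn : 0 < n := pos_of_mul_pos_right hmn m.zero_le
  have : Inhabited (Fin m × Fin n) := ⟨(⟨0, hm⟩, ⟨0, hn⟩)⟩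
  choose Q hQ hQd using fun g => Prot.exists_depth_eq_CC (Prot.exists_solves (hK g))
  obtain ⟨enc, henc, hlen⟩ := exists_listEncoding ((Fin m × Fin n) × P)
  simp only [Fintype.card_prod, Fintype.card_fin] at hlen
  have hdec : ∀ c, Function.partialInv enc (enc c) = some c := Function.partialInv_left henc
  refine Cphd_le_of_simulate_verify (fun g => (Q g).comap (toKWA g) (toKWB g))
    (fun g => by rw [Prot.depth_comap, hQd]; exact hD g)
    (fun x o => enc (o, payload (muxGA x) x.1.2 o)) (fun _ _ => hlen _)
    (fun y l => (Function.partialInv enc l).elim false fun c => check (muxGB y) y.1.2 c.1 c.2)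
    (fun l => (Function.partialInv enc l).map Prod.fst) none hnone
    (fun x y o h => by simp_all) (fun x y hg => ?_)
  have hy : compFG f (muxGA x) y.1.2 = false := hg ▸ y.2
  rw [Prot.run_comap _ (dif_pos x.2) (dif_pos hy), hdec]
  simpa [← hg] using hcheck _ _ _ _ (hQ (muxGA x) ⟨x.1.2, x.2⟩ ⟨y.1.2, hy⟩)

theorem exists_Cphd_mux_le {s : ℕ} (hP : Fintype.card P = 2 ^ s)
    (hK : ∀ g X Y, ∃ o, K g X Y o)
    (hnone : ∀ x y, muxGA x ≠ muxGB y → R x y none)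
    (hsome : ∀ x y o, check (muxGB y) y.1.2 o (payload (muxGA x) x.1.2 o) = true →
      R x y (some o))
    (hcheck : ∀ g X Y o, K g X Y o → check g Y.1 o (payload g X.1 o) = true) :
    ∃ g, (Cphd R muxGA muxGB : ℝ) ≤ CC (K g) + Real.logb 2 (m * n) + s + 2 := by
  obtain ⟨g, hg⟩ := Finite.exists_max fun g => CC (K g)
  refine ⟨g, ?_⟩
  rcases (m * n).eq_zero_or_pos with hmn | hmn
  · rw [Cphd_eq_zero_of_forall none fun x y => hnone x y (muxGA_ne_muxGB_of_mul_eq_zero hmn x y)]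
    have : ((m : ℝ) * n) = 0 := by exact_mod_cast hmn
    rw [this, Real.logb_zero]
    push_cast
    positivity
  · have hC := Cphd_mux_le hmn hK hg hnone hsome hcheck
    have hlog := natCast_clog_two_lt_logb_add_one (m * n * Fintype.card P)
    have hlogb : Real.logb 2 ((m * n * Fintype.card P : ℕ) : ℝ) = Real.logb 2 (m * n) + s := by
      have hmn' : ((m : ℝ) * n) ≠ 0 := by exact_mod_cast hmn.ne'
      rw [hP]
      push_cast
      rw [Real.logb_mul hmn' (by positivity), Real.logb_pow, Real.logb_self_eq_one one_lt_two,
        mul_one]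
    have hC' : (Cphd R muxGA muxGB : ℝ) ≤
        CC (K g) + (Nat.clog 2 (m * n * Fintype.card P) + 1) := by
      exact_mod_cast hC
    linarith

end Mux

theorem statement1_general (m n : ℕ) (f : BFunc m) :
    (∃ g : BFunc n,
        (Cphd (MuxDiam (m := m) (n := n) f) muxGA muxGB : ℝ) -
            Real.logb 2 ((m : ℝ) * n) - 3 ≤ (CC (KWdiam f g) : ℝ)) ∧
    (∃ g : BFunc n,
        (Cphd (MuxStrong (m := m) (n := n) f) muxGA muxGB : ℝ) -
            Real.logb 2 ((m : ℝ) * n) - 4 ≤ (CC (KWstrong f g) : ℝ)) := by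
  constructor
  · obtain ⟨g, hg⟩ := exists_Cphd_mux_le (n := n) (P := Bool) (s := 1) (R := MuxDiam f)
      (K := KWdiam f) (payload := fun _ X o => X o.1 o.2) (check := fun _ Y o b => Y o.1 o.2 != b)
      rfl (fun g X Y => (exists_KWstrong g X Y).imp fun _ h => h.1) (fun _ _ h => h)
      (fun _ _ _ h => (bne_iff_ne.mp h).symm) (fun _ _ _ _ h => bne_iff_ne.mpr (Ne.symm h))
    exact ⟨g, by push_cast at hg; linarith⟩
  · obtain ⟨g, hg⟩ := exists_Cphd_mux_le (n := n) (P := Bool × Bool) (s := 2)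
      (R := MuxStrong f) (K := KWstrong f) (payload := fun g X o => (X o.1 o.2, g (X o.1)))
      (check := fun g Y o c => (Y o.1 o.2 != c.1) && (g (Y o.1) != c.2)) rfl
      exists_KWstrong (fun _ _ h => h)
      (fun _ _ _ h => by
        obtain ⟨h₁, h₂⟩ := Bool.and_eq_true_iff.mp h
        exact ⟨(bne_iff_ne.mp h₁).symm, (bne_iff_ne.mp h₂).symm⟩)
      (fun _ _ _ _ h => Bool.and_eq_true_iff.mpr
        ⟨bne_iff_ne.mpr (Ne.symm h.1), bne_iff_ne.mpr (Ne.symm h.2)⟩)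
    exact ⟨g, by push_cast at hg; linarith⟩

theorem statement1 (m n : ℕ) (f : BFunc m) (hf : NonConst f) :
    (∃ g : BFunc n,
        (Cphd (MuxDiam (m := m) (n := n) f) muxGA muxGB : ℝ) -
            Real.logb 2 ((m : ℝ) * n) - 3 ≤ (CC (KWdiam f g) : ℝ)) ∧
    (∃ g : BFunc n,
        (Cphd (MuxStrong (m := m) (n := n) f) muxGA muxGB : ℝ) -
            Real.logb 2 ((m : ℝ) * n) - 4 ≤ (CC (KWstrong f g) : ℝ)) :=
  statement1_general m n f
end

section
/- Let Π be a standard deterministic protocol solving KW_f ⋄ MUX_n for some non-constant f:{0,1}^m→{0,1} and n∈ℕ, and let π₁ be a transcript of Π such that V_{π₁}≠∅ and χ(G_{π₁}) ≥ 2. Then the depth of Π is at least |π₁| + log₂ log₂ χ(G_{π₁}) − 2. -/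
/-!
Let `d = depth Π - |π₁|`. Colour each function `g ∈ V_{π₁}` by the set of continuations `s`,
`|s| ≤ d`, such that Alice has an input `(g, X)` consistent with `π₁ s`. If
`Z ∈ X_{π₁}(g_A) ∩ Y_{π₁}(g_B)`, run `Π` on `(g_A, Z)` and `(g_B, Z)` and let `π₁ s` be the full
transcript: the output must be `⊥`, since the matrices agree. Were some `(g_B, X')` also
consistent with `π₁ s`, then `Π` would output `⊥` on `(g_B, X')` and `(g_B, Z)` as well, which is
wrong. So adjacent functions get different colours; as there are fewer than `2 ^ (d + 1)`
strings `s`, this gives `χ(G_{π₁}) ≤ 2 ^ 2 ^ (d + 1)`.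
-/

lemma apply_le_max_false_true {α : Type*} [LinearOrder α] (c : Bool → α) (b : Bool) :
    c b ≤ max (c false) (c true) := by
  cases b <;> simp

namespace Prot

variable {X Y O : Type}

def trace : Prot X Y O → X → Y → List Bool
  | leaf _, _, _ => []
  | alice s c, x, y => s x :: trace (c (s x)) x y
  | bob s c, x, y => s y :: trace (c (s y)) x y

theorem length_le_depth_of_consA {p : Prot X Y O} {tr : List Bool} {x : X}
    (h : ConsA p tr x) : tr.length ≤ p.depth := by
  induction p generalizing tr with
  | leaf o =>
    cases tr with
    | nil => simp
    | cons b t => exact h.elim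
  | alice s c ih =>
    cases tr with
    | nil => simp
    | cons b t =>
      have ht := ih b h.2
      have hb := apply_le_max_false_true (fun b => (c b).depth) b
      simp only [depth, List.length_cons]
      omega
  | bob s c ih =>
    cases tr with
    | nil => simp
    | cons b t =>
      have ht := ih b h
      have hb := apply_le_max_false_true (fun b => (c b).depth) b
      simp only [depth, List.length_cons]
      omega

theorem consA_trace (p : Prot X Y O) (x : X) (y : Y) : ConsA p (trace p x y) x := by
  induction p with
  | leaf o => trivial
  | alice s c ih => exact ⟨rfl, ih (s x)⟩
  | bob s c ih => exact ih (s y)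

theorem consB_trace (p : Prot X Y O) (x : X) (y : Y) : ConsB p (trace p x y) y := by
  induction p with
  | leaf o => trivial
  | alice s c ih => exact ih (s x)
  | bob s c ih => exact ⟨rfl, ih (s y)⟩

theorem prefix_trace {p : Prot X Y O} {tr : List Bool} {x : X} {y : Y}
    (hx : ConsA p tr x) (hy : ConsB p tr y) : tr <+: trace p x y := by
  induction p generalizing tr with
  | leaf o =>
    cases tr with
    | nil => simp
    | cons b t => exact hx.elim
  | alice s c ih =>
    cases tr with
    | nil => simp
    | cons b t =>
      obtain ⟨rfl, hx⟩ := hx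
      exact List.cons_prefix_cons.mpr ⟨rfl, ih (s x) hx hy⟩
  | bob s c ih =>
    cases tr with
    | nil => simp
    | cons b t =>
      obtain ⟨rfl, hy⟩ := hy
      exact List.cons_prefix_cons.mpr ⟨rfl, ih (s y) hx hy⟩

theorem run_eq_of_consA_trace_of_consB_trace {p : Prot X Y O} {x x' : X} {y y' : Y}
    (hx : ConsA p (trace p x y) x') (hy : ConsB p (trace p x y) y') :
    run p x' y' = run p x y := by
  induction p with
  | leaf o => rfl
  | alice s c ih =>
    obtain ⟨hs, hx⟩ := hx
    simp only [run, hs]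
    exact ih (s x) hx hy
  | bob s c ih =>
    obtain ⟨hs, hy⟩ := hy
    simp only [run, hs]
    exact ih (s y) hx hy

theorem exists_leaf_extension {p : Prot X Y O} {tr : List Bool} {x : X} {y : Y}
    (hx : ConsA p tr x) (hy : ConsB p tr y) :
    ∃ s : List Bool, (tr ++ s).length ≤ p.depth ∧ ConsA p (tr ++ s) x ∧ ConsB p (tr ++ s) y ∧
      ∀ x' y', ConsA p (tr ++ s) x' → ConsB p (tr ++ s) y' → run p x' y' = run p x y := by
  obtain ⟨s, hs⟩ := prefix_trace hx hy
  refine ⟨s, ?_⟩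
  rw [hs]
  exact ⟨length_le_depth_of_consA (consA_trace p x y), consA_trace p x y,
    consB_trace p x y, fun _ _ => run_eq_of_consA_trace_of_consB_trace⟩

end Prot

section MuxDiam

variable {m n : ℕ} {f : BFunc m}

theorem MuxDiam.eq_none_of_matrix_eq {x : AliceMux m n f} {y : BobMux m n f}
    {o : Option (Fin m × Fin n)} (h : MuxDiam f x y o) (hxy : x.1.2 = y.1.2) : o = none := by
  rcases o with _ | ⟨i, j⟩
  · rfl
  · exact absurd (congrFun (congrFun hxy i) j) h

theorem MuxDiam.ne_none_of_function_eq {x : AliceMux m n f} {y : BobMux m n f}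
    {o : Option (Fin m × Fin n)} (h : MuxDiam f x y o) (hxy : x.1.1 = y.1.1) : o ≠ none := by
  rintro rfl
  exact h hxy

theorem exists_extension_xpiP_separates
    {p : Prot (AliceMux m n f) (BobMux m n f) (Option (Fin m × Fin n))}
    (hsol : p.Solves (MuxDiam f)) {tr : List Bool} {gA gB : BFunc n} {Z : BMat m n}
    (hZ : Z ∈ XpiP p tr gA ∩ YpiP p tr gB) :
    ∃ s : List Bool, (tr ++ s).length ≤ p.depth ∧
      (XpiP p (tr ++ s) gA).Nonempty ∧ ¬ (XpiP p (tr ++ s) gB).Nonempty := by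
  obtain ⟨⟨hA, hxZ⟩, ⟨hB, hyZ⟩⟩ := hZ
  obtain ⟨s, hlen, hx, hy, hrun⟩ := Prot.exists_leaf_extension hxZ hyZ
  have hnone : p.run ⟨(gA, Z), hA⟩ ⟨(gB, Z), hB⟩ = none :=
    (hsol _ _).eq_none_of_matrix_eq rfl
  refine ⟨s, hlen, ⟨Z, hA, hx⟩, ?_⟩
  rintro ⟨X', hX', hx'⟩
  exact (hsol ⟨(gB, X'), hX'⟩ ⟨(gB, Z), hB⟩).ne_none_of_function_eq rfl
    ((hrun _ _ hx' hy).trans hnone)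

end MuxDiam

theorem card_sigma_vector_lt {α : Type} [Fintype α] (hα : 2 ≤ Fintype.card α) (d : ℕ) :
    Fintype.card (Σ k : Fin (d + 1), List.Vector α k) < Fintype.card α ^ (d + 1) := by
  rw [Fintype.card_sigma]
  simp only [card_vector]
  rw [Fin.sum_univ_eq_sum_range (fun k => Fintype.card α ^ k)]
  exact Nat.geomSum_lt hα (by simp)

theorem colorable_charGraphDiamP {m n : ℕ} {f : BFunc m}
    {p : Prot (AliceMux m n f) (BobMux m n f) (Option (Fin m × Fin n))}
    (hsol : p.Solves (MuxDiam f)) (tr : List Bool) (V : Set (BFunc n)) :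
    (charGraphDiamP p tr V).Colorable (2 ^ 2 ^ (p.depth - tr.length + 1)) := by
  set d := p.depth - tr.length
  let colour (g : BFunc n) : Set (Σ k : Fin (d + 1), List.Vector Bool k) :=
    {v | (XpiP p (tr ++ v.2.toList) g).Nonempty}
  have separates {g g' : BFunc n} (h : (XpiP p tr g ∩ YpiP p tr g').Nonempty) :
      colour g ≠ colour g' := by
    obtain ⟨Z, hZ⟩ := h
    obtain ⟨s, hlen, hg, hg'⟩ := exists_extension_xpiP_separates hsol hZ
    have hs : s.length < d + 1 := by
      rw [List.length_append] at hlen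
      omega
    intro heq
    have hmem : (⟨⟨s.length, hs⟩, ⟨s, rfl⟩⟩ : Σ k : Fin (d + 1), List.Vector Bool k) ∈ colour g :=
      hg
    rw [heq] at hmem
    exact hg' hmem
  let C : (charGraphDiamP p tr V).Coloring (Set (Σ k : Fin (d + 1), List.Vector Bool k)) :=
    SimpleGraph.Coloring.mk (fun g => colour g) fun {a b} hab => by
      rcases hab.2 with h | h
      · exact separates h
      · exact (separates h).symm
  refine C.colorable.mono ?_
  rw [Fintype.card_set]
  exact Nat.pow_le_pow_right two_pos (card_sigma_vector_lt (by simp) d).le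

theorem logb_logb_le_of_le_two_pow_two_pow {N k : ℕ} (h : N ≤ 2 ^ 2 ^ k) :
    Real.logb 2 (Real.logb 2 N) ≤ k := by
  rcases Nat.eq_zero_or_pos N with rfl | hN
  · simp
  have hlog : 0 ≤ Real.logb 2 N := Real.logb_nonneg one_lt_two (by exact_mod_cast hN)
  rcases hlog.eq_or_lt with hlog | hlog
  · simp [← hlog]
  have hlog_le : Real.logb 2 N ≤ 2 ^ k := by
    rw [Real.logb_le_iff_le_rpow one_lt_two (by exact_mod_cast hN),
      show ((2 : ℝ) ^ k) = ((2 ^ k : ℕ) : ℝ) by push_cast; ring, Real.rpow_natCast]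
    exact_mod_cast h
  rw [Real.logb_le_iff_le_rpow one_lt_two hlog, Real.rpow_natCast]
  exact hlog_le

theorem statement6_general (m n : ℕ) (f : BFunc m)
    (p : Prot (AliceMux m n f) (BobMux m n f) (Option (Fin m × Fin n)))
    (hsol : p.Solves (MuxDiam f)) (tr : List Bool) (htr : p.IsTranscript tr) :
    (tr.length : ℝ) +
        Real.logb 2 (Real.logb 2
          (((charGraphDiamP p tr (VpiPset p tr)).chromaticNumber.toNat : ℝ))) - 2 ≤
      (p.depth : ℝ) := by
  obtain ⟨⟨x, hx⟩, -⟩ := htr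
  have hlen : tr.length ≤ p.depth := Prot.length_le_depth_of_consA hx
  have hχ := ENat.toNat_le_of_le_natCast
    (colorable_charGraphDiamP hsol tr (VpiPset p tr)).chromaticNumber_le
  have hloglog := logb_logb_le_of_le_two_pow_two_pow hχ
  push_cast [Nat.cast_sub hlen] at hloglog
  linarith

theorem statement6 (m n : ℕ) (f : BFunc m) (hf : NonConst f)
    (p : Prot (AliceMux m n f) (BobMux m n f) (Option (Fin m × Fin n)))
    (hsol : p.Solves (MuxDiam f)) (tr : List Bool) (htr : p.IsTranscript tr)
    (hV : (VpiPset p tr).Nonempty)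
    (hchi : (2 : ℕ∞) ≤ (charGraphDiamP p tr (VpiPset p tr)).chromaticNumber) :
    (tr.length : ℝ) +
        Real.logb 2 (Real.logb 2
          (((charGraphDiamP p tr (VpiPset p tr)).chromaticNumber.toNat : ℝ))) - 2 ≤
      (p.depth : ℝ) :=
  statement6_general m n f p hsol tr htr
end
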